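/- arXiv:1508.05424 — 7 statements merged into one kernel-verified Lean document; each statement's English description precedes it below -/
import Mathlib

section
/- Let N be a reticulation-visible phylogenetic network on a leaf set X with m = |X| ≥ 1 leaves. Then N has at most 8m − 7 vertices in total. -/
/-- A directed graph with a distinguished vertex set, arc set and root,
intended to model (binary) phylogenetic networks. Since arcs form a
`Finset` of ordered pairs, there are no parallel arcs. -/
structure Net (V : Type) [DecidableEq V] where
  verts : Finset V
  arcs : Finset (V × V)
  root : V

variable {V : Type} [DecidableEq V]

namespace Net

def Arc (N : Net V) (u v : V) : Prop := (u, v) ∈ N.arcs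

def outdeg (N : Net V) (v : V) : ℕ := (N.arcs.filter (fun e => e.1 = v)).card

def indeg (N : Net V) (v : V) : ℕ := (N.arcs.filter (fun e => e.2 = v)).card

def IsLeaf (N : Net V) (v : V) : Prop := v ∈ N.verts ∧ N.outdeg v = 0

def IsRetic (N : Net V) (v : V) : Prop :=
  v ∈ N.verts ∧ N.indeg v = 2 ∧ N.outdeg v = 1

def IsTreeVtx (N : Net V) (v : V) : Prop :=
  v ∈ N.verts ∧ N.indeg v = 1 ∧ N.outdeg v = 2

/-- The set of leaves (out-degree-zero vertices); this is the taxa set `X`. -/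
def leaves (N : Net V) : Finset V := N.verts.filter (fun v => N.outdeg v = 0)

/-- The set of reticulation vertices. -/
def retics (N : Net V) : Finset V :=
  N.verts.filter (fun v => N.indeg v = 2 ∧ N.outdeg v = 1)

/-- `u` is an ancestor of `v`: there is a directed path from `u` to `v`.
(Reflexive, as in the reachability order.) -/
def Ancestor (N : Net V) (u v : V) : Prop := Relation.ReflTransGen N.Arc u v

/-- `IsPathList N u v l` : `l` is the list of vertices of a directed path
from `u` to `v` in `N`. -/
inductive IsPathList (N : Net V) : V → V → List V → Prop
  | nil (v : V) : IsPathList N v v [v]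
  | cons {u w x : V} {l : List V} : N.Arc u w → IsPathList N w x l →
      IsPathList N u x (u :: l)

/-- The leaf `ℓ` verifies the vertex `v`: every directed path from the root
to `ℓ` passes through `v`. -/
def Verifies (N : Net V) (ℓ v : V) : Prop :=
  ∀ l : List V, N.IsPathList N.root ℓ l → v ∈ l

def Visible (N : Net V) (v : V) : Prop := ∃ ℓ, N.IsLeaf ℓ ∧ N.Verifies ℓ v

def ReticVisible (N : Net V) : Prop := ∀ v, N.IsRetic v → N.Visible v

/-- `N` is a (binary) phylogenetic network: a rooted acyclic digraph with no
parallel arcs in which the root has in-degree zero and out-degree two, every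
other vertex is a leaf (in-degree one, out-degree zero), a tree vertex
(in-degree one, out-degree two) or a reticulation (in-degree two, out-degree
one); if there is a single vertex the network has no arcs. -/
def IsPhylo (N : Net V) : Prop :=
  N.root ∈ N.verts ∧
  (∀ e ∈ N.arcs, e.1 ∈ N.verts ∧ e.2 ∈ N.verts) ∧
  (∀ v : V, ¬ Relation.TransGen N.Arc v v) ∧
  (∀ v ∈ N.verts, N.Ancestor N.root v) ∧
  (if N.verts.card = 1 then N.arcs = ∅
   else
    N.indeg N.root = 0 ∧ N.outdeg N.root = 2 ∧
    ∀ v ∈ N.verts, v ≠ N.root →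
      (N.indeg v = 1 ∧ N.outdeg v = 0) ∨
      (N.indeg v = 1 ∧ N.outdeg v = 2) ∨
      (N.indeg v = 2 ∧ N.outdeg v = 1))

end Net

/-!
Delete the reticulations. What is left splits into tree components, each hanging from the root
or from the child of a reticulation; visibility forbids an arc between two reticulations, so
these children are not reticulations and there are `r + 1` components for `r` reticulations.
A component containing no leaf has at least two vertices: otherwise every vertex below its
root, in particular the leaf witnessing the visibility of the reticulation above it, would lie
in it. All its vertices have out-degree two, so it sends at least three of the `2r` arcs that
enter reticulations. Since at most `m` components contain a leaf, `r + 1 ≤ m + 2r/3`, that is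
`r ≤ 3(m - 1)`, and degree counting gives `|V| = 2(m + r) - 1 ≤ 8m - 7`.
-/

namespace Net

variable {N : Net V}

namespace IsPathList

theorem append {a b c d : V} {l₁ l₂ : List V} (h₁ : N.IsPathList a b l₁) (hbc : N.Arc b c)
    (h₂ : N.IsPathList c d l₂) : N.IsPathList a d (l₁ ++ l₂) := by
  induction h₁ with
  | nil => exact cons hbc h₂
  | cons hab _ ih => exact cons hab (ih hbc)

theorem head_mem {a b : V} {l : List V} (h : N.IsPathList a b l) : a ∈ l := by
  cases h <;> exact List.mem_cons_self

theorem ancestor {a b : V} {l : List V} (h : N.IsPathList a b l) : N.Ancestor a b := by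
  induction h with
  | nil => exact .refl
  | cons hab _ ih => exact .head hab ih

theorem ancestor_of_mem {a b u : V} {l : List V} (h : N.IsPathList a b l) (hu : u ∈ l) :
    N.Ancestor a u ∧ N.Ancestor u b := by
  induction h with
  | nil => rw [List.mem_singleton.1 hu]; exact ⟨.refl, .refl⟩
  | cons hab hl ih =>
    rcases List.mem_cons.1 hu with rfl | hu
    · exact ⟨.refl, .head hab hl.ancestor⟩
    · exact ⟨.head hab (ih hu).1, (ih hu).2⟩

theorem exists_arc_mem_of_mem {a b u : V} {l : List V} (h : N.IsPathList a b l) (hu : u ∈ l)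
    (hub : u ≠ b) : ∃ c ∈ l, N.Arc u c := by
  induction h with
  | nil => exact absurd (List.mem_singleton.1 hu) hub
  | cons hab hl ih =>
    rcases List.mem_cons.1 hu with rfl | hu
    · exact ⟨_, List.mem_cons_of_mem _ hl.head_mem, hab⟩
    · obtain ⟨c, hc, huc⟩ := ih hu hub
      exact ⟨c, List.mem_cons_of_mem _ hc, huc⟩

end IsPathList

theorem Ancestor.exists_isPathList {a b : V} (h : N.Ancestor a b) : ∃ l, N.IsPathList a b l := by
  induction h using Relation.ReflTransGen.head_induction_on with
  | refl => exact ⟨_, .nil b⟩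
  | head hac _ ih =>
    obtain ⟨l, hl⟩ := ih
    exact ⟨_, .cons hac hl⟩

theorem verifies_root (u : V) : N.Verifies u N.root := fun _ hl => hl.head_mem

theorem Verifies.eq_root {v : V} (h : N.Verifies N.root v) : v = N.root :=
  List.mem_singleton.1 (h _ (.nil _))

theorem Verifies.of_arc {u v p : V} (h : N.Verifies u v) (hvu : v ≠ u) (hpu : N.Arc p u) :
    N.Verifies p v := by
  intro l hl
  rcases List.mem_append.1 (h _ (hl.append hpu (.nil u))) with hv | hv
  · exact hv
  · exact absurd (List.mem_singleton.1 hv) hvu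

theorem eq_of_indeg_eq_one {v p q : V} (h : N.indeg v = 1) (hp : N.Arc p v) (hq : N.Arc q v) :
    p = q :=
  congrArg Prod.fst <| Finset.card_le_one.1 h.le _ (Finset.mem_filter.2 ⟨hp, rfl⟩) _
    (Finset.mem_filter.2 ⟨hq, rfl⟩)

theorem eq_of_outdeg_eq_one {v c d : V} (h : N.outdeg v = 1) (hc : N.Arc v c) (hd : N.Arc v d) :
    c = d :=
  congrArg Prod.snd <| Finset.card_le_one.1 h.le _ (Finset.mem_filter.2 ⟨hc, rfl⟩) _
    (Finset.mem_filter.2 ⟨hd, rfl⟩)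

theorem exists_arc_of_indeg_ne_zero {v : V} (h : N.indeg v ≠ 0) : ∃ p, N.Arc p v := by
  obtain ⟨e, he⟩ := Finset.card_pos.1 (Nat.pos_of_ne_zero h)
  obtain ⟨harc, rfl⟩ := Finset.mem_filter.1 he
  exact ⟨e.1, harc⟩

theorem exists_arc_of_outdeg_ne_zero {v : V} (h : N.outdeg v ≠ 0) : ∃ c, N.Arc v c := by
  obtain ⟨e, he⟩ := Finset.card_pos.1 (Nat.pos_of_ne_zero h)
  obtain ⟨harc, rfl⟩ := Finset.mem_filter.1 he
  exact ⟨e.2, harc⟩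

theorem exists_arc_ne_of_two_le_indeg {v : V} (h : 2 ≤ N.indeg v) (p : V) :
    ∃ q, q ≠ p ∧ N.Arc q v := by
  obtain ⟨e, he, hne⟩ := Finset.exists_mem_ne h (p, v)
  obtain ⟨harc, rfl⟩ := Finset.mem_filter.1 he
  exact ⟨e.1, fun hp => hne (Prod.ext hp rfl), harc⟩

theorem not_arc_of_indeg_eq_zero {u v : V} (h : N.indeg v = 0) : ¬ N.Arc u v := fun huv =>
  Finset.card_eq_zero.1 h ▸ Finset.mem_filter.2 ⟨huv, rfl⟩ |> Finset.notMem_empty (u, v)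

theorem card_filter_fst_mem_eq_sum_outdeg (S : Finset V) :
    (N.arcs.filter fun e => e.1 ∈ S).card = ∑ v ∈ S, N.outdeg v := by
  rw [Finset.card_eq_sum_card_fiberwise (f := Prod.fst) (t := S)
    (s := N.arcs.filter fun e => e.1 ∈ S) fun e he => (Finset.mem_filter.1 he).2]
  refine Finset.sum_congr rfl fun v hv => ?_
  rw [Finset.filter_filter, outdeg]
  exact congrArg _ (Finset.filter_congr fun e _ => ⟨And.right, fun h => ⟨h ▸ hv, h⟩⟩)

theorem card_filter_snd_mem_eq_sum_indeg (S : Finset V) :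
    (N.arcs.filter fun e => e.2 ∈ S).card = ∑ v ∈ S, N.indeg v := by
  rw [Finset.card_eq_sum_card_fiberwise (f := Prod.snd) (t := S)
    (s := N.arcs.filter fun e => e.2 ∈ S) fun e he => (Finset.mem_filter.1 he).2]
  refine Finset.sum_congr rfl fun v hv => ?_
  rw [Finset.filter_filter, indeg]
  exact congrArg _ (Finset.filter_congr fun e _ => ⟨And.right, fun h => ⟨h ▸ hv, h⟩⟩)

theorem mem_retics {v : V} : v ∈ N.retics ↔ N.IsRetic v := by
  simp only [retics, Finset.mem_filter, IsRetic]

theorem Verifies.of_outdeg_eq_one {u w ρ : V} (h : N.Verifies u w) (hw : N.outdeg w = 1)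
    (hwρ : N.Arc w ρ) (huw : u ≠ w) : N.Verifies u ρ := fun l hl => by
  obtain ⟨c, hc, hwc⟩ := hl.exists_arc_mem_of_mem (h l hl) huw.symm
  exact eq_of_outdeg_eq_one hw hwc hwρ ▸ hc

/-- The conditions of `IsPhylo` for a network with more than one vertex. -/
structure IsBinaryNet (N : Net V) : Prop where
  root_mem : N.root ∈ N.verts
  fst_mem {u v : V} : N.Arc u v → u ∈ N.verts
  snd_mem {u v : V} : N.Arc u v → v ∈ N.verts
  acyclic (v : V) : ¬ Relation.TransGen N.Arc v v
  root_ancestor {v : V} : v ∈ N.verts → N.Ancestor N.root v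
  indeg_root : N.indeg N.root = 0
  outdeg_root : N.outdeg N.root = 2
  degrees {v : V} : v ∈ N.verts → v ≠ N.root →
    (N.indeg v = 1 ∧ N.outdeg v = 0) ∨ (N.indeg v = 1 ∧ N.outdeg v = 2) ∨
      (N.indeg v = 2 ∧ N.outdeg v = 1)

theorem IsPhylo.isBinaryNet (h : N.IsPhylo) (hn : N.verts.card ≠ 1) : N.IsBinaryNet := by
  obtain ⟨hroot, hmem, hacyc, hanc, hdeg⟩ := h
  rw [if_neg hn] at hdeg
  exact ⟨hroot, fun h => (hmem _ h).1, fun h => (hmem _ h).2, hacyc, hanc _, hdeg.1, hdeg.2.1,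
    hdeg.2.2 _⟩

namespace IsBinaryNet

theorem ne_root_of_arc (hN : N.IsBinaryNet) {p u : V} (h : N.Arc p u) : u ≠ N.root := by
  rintro rfl
  exact not_arc_of_indeg_eq_zero hN.indeg_root h

theorem not_isRetic_root (hN : N.IsBinaryNet) : ¬ N.IsRetic N.root := fun h => by
  simp [IsRetic, hN.indeg_root] at h

theorem indeg_eq_one (hN : N.IsBinaryNet) {v : V} (hv : v ∈ N.verts) (hr : v ≠ N.root)
    (hnr : ¬ N.IsRetic v) : N.indeg v = 1 := by
  rcases hN.degrees hv hr with h | h | h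
  · exact h.1
  · exact h.1
  · exact absurd ⟨hv, h⟩ hnr

theorem outdeg_eq_two (hN : N.IsBinaryNet) {v : V} (hv : v ∈ N.verts) (hnr : ¬ N.IsRetic v)
    (hl : N.outdeg v ≠ 0) : N.outdeg v = 2 := by
  by_cases hr : v = N.root
  · exact hr ▸ hN.outdeg_root
  rcases hN.degrees hv hr with h | h | h
  · exact absurd h.2 hl
  · exact h.2
  · exact absurd ⟨hv, h⟩ hnr

theorem not_ancestor_of_arc (hN : N.IsBinaryNet) {a b : V} (hab : N.Arc a b) :
    ¬ N.Ancestor b a := fun hba =>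
  hN.acyclic a (.head' hab hba)

theorem wellFounded_arc (hN : N.IsBinaryNet) : WellFounded N.Arc := by
  classical
  let ancestors (v : V) := N.verts.filter fun x => N.Ancestor x v
  have hlt {a b : V} (hab : N.Arc a b) : (ancestors a).card < (ancestors b).card := by
    refine Finset.card_lt_card ⟨fun x hx => ?_, fun hsub => ?_⟩
    · obtain ⟨hx, hxa⟩ := Finset.mem_filter.1 hx
      exact Finset.mem_filter.2 ⟨hx, hxa.tail hab⟩
    · have hb := hsub (Finset.mem_filter.2 ⟨hN.snd_mem hab, Relation.ReflTransGen.refl⟩)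
      exact hN.not_ancestor_of_arc hab (Finset.mem_filter.1 hb).2
  exact Subrelation.wf hlt (measure fun v => (ancestors v).card).wf

theorem card_verts_add_one (hN : N.IsBinaryNet) :
    N.verts.card + 1 = 2 * (N.leaves.card + N.retics.card) := by
  have hsum_out : ∑ v ∈ N.verts, N.outdeg v = N.arcs.card := by
    rw [← card_filter_fst_mem_eq_sum_outdeg,
      Finset.filter_true_of_mem fun e he => hN.fst_mem (u := e.1) (v := e.2) he]
  have hsum_in : ∑ v ∈ N.verts, N.indeg v = N.arcs.card := by
    rw [← card_filter_snd_mem_eq_sum_indeg,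
      Finset.filter_true_of_mem fun e he => hN.snd_mem (u := e.1) (v := e.2) he]
  -- the out-degree exceeds the in-degree by one at tree vertices, two at the root,
  -- and falls short of it by one at leaves and reticulations
  have hvertex : ∀ v ∈ N.verts,
      N.outdeg v + 2 * (if N.outdeg v = 0 then 1 else 0) +
        2 * (if N.indeg v = 2 ∧ N.outdeg v = 1 then 1 else 0) =
      N.indeg v + 1 + if v = N.root then 1 else 0 := by
    intro v hv
    by_cases hr : v = N.root
    · subst hr; simp [hN.indeg_root, hN.outdeg_root]
    rcases hN.degrees hv hr with ⟨h₁, h₂⟩ | ⟨h₁, h₂⟩ | ⟨h₁, h₂⟩ <;> simp [h₁, h₂, hr]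
  have := Finset.sum_congr rfl hvertex
  simp only [Finset.sum_add_distrib, ← Finset.mul_sum, ← Finset.card_filter,
    Finset.sum_ite_eq', hN.root_mem, if_true, Finset.sum_const, smul_eq_mul, mul_one] at this
  rw [leaves, retics]
  omega

theorem not_isRetic_of_arc (hN : N.IsBinaryNet) (hrv : N.ReticVisible) {a b : V}
    (ha : N.IsRetic a) (hab : N.Arc a b) : ¬ N.IsRetic b := by
  intro hb
  obtain ⟨ℓ, ⟨hℓ, hℓ0⟩, hver⟩ := hrv a ha
  obtain ⟨q, hqa, hqb⟩ := exists_arc_ne_of_two_le_indeg hb.2.1.ge a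
  have hbelow {x : V} (hax : N.Ancestor a x) (hxa : x ≠ a) : N.Ancestor b x := by
    rcases hax.cases_head with rfl | ⟨c, hac, hcx⟩
    · exact absurd rfl hxa
    · exact eq_of_outdeg_eq_one ha.2.2 hac hab ▸ hcx
  obtain ⟨l, hl⟩ := (hN.root_ancestor hℓ).exists_isPathList
  have hℓa : ℓ ≠ a := fun h => by simp [h, ha.2.2] at hℓ0
  obtain ⟨l₂, hl₂⟩ := (hbelow (hl.ancestor_of_mem (hver l hl)).2 hℓa).exists_isPathList
  obtain ⟨l₁, hl₁⟩ := (hN.root_ancestor (hN.fst_mem hqb)).exists_isPathList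
  -- the path through `q` and `b` avoids `a`, contradicting the visibility of `a`
  rcases List.mem_append.1 (hver _ (hl₁.append hqb hl₂)) with h | h
  · exact hN.not_ancestor_of_arc hqb (hbelow (hl₁.ancestor_of_mem h).2 hqa)
  · exact hN.not_ancestor_of_arc hab (hl₂.ancestor_of_mem h).1

end IsBinaryNet

def TreeArc (N : Net V) (a b : V) : Prop := N.Arc a b ∧ ¬ N.IsRetic a ∧ ¬ N.IsRetic b

def Reach (N : Net V) : V → V → Prop := Relation.ReflTransGen N.TreeArc

open Classical in
noncomputable def comp (N : Net V) (ρ : V) : Finset V := N.verts.filter (N.Reach ρ)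

def IsCompRoot (N : Net V) (ρ : V) : Prop :=
  ρ ∈ N.verts ∧ ¬ N.IsRetic ρ ∧ (ρ = N.root ∨ ∃ w, N.IsRetic w ∧ N.Arc w ρ)

open Classical in
noncomputable def compRoots (N : Net V) : Finset V := N.verts.filter N.IsCompRoot

def reticArcs (N : Net V) : Finset (V × V) := N.arcs.filter fun e => e.2 ∈ N.retics

theorem mem_comp {ρ u : V} : u ∈ N.comp ρ ↔ u ∈ N.verts ∧ N.Reach ρ u := by
  simp only [comp, Finset.mem_filter]

theorem self_mem_comp {ρ : V} (hρ : ρ ∈ N.verts) : ρ ∈ N.comp ρ :=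
  mem_comp.2 ⟨hρ, .refl⟩

theorem not_isRetic_of_mem_comp {ρ u : V} (hρ : ¬ N.IsRetic ρ) (hu : u ∈ N.comp ρ) :
    ¬ N.IsRetic u := by
  rcases (mem_comp.1 hu).2.cases_tail with rfl | ⟨_, _, hcu⟩
  · exact hρ
  · exact hcu.2.2

theorem mem_compRoots {ρ : V} : ρ ∈ N.compRoots ↔ N.IsCompRoot ρ := by
  simp only [compRoots, Finset.mem_filter, and_iff_right_iff_imp]
  exact And.left

namespace IsBinaryNet

theorem mem_comp_of_treeArc (hN : N.IsBinaryNet) {ρ p u : V} (hp : p ∈ N.comp ρ)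
    (h : N.TreeArc p u) : u ∈ N.comp ρ :=
  mem_comp.2 ⟨hN.snd_mem h.1, (mem_comp.1 hp).2.tail h⟩

theorem treeArc_leftUnique (hN : N.IsBinaryNet) : Relator.LeftUnique N.TreeArc :=
  fun _ _ _ h₁ h₂ => eq_of_indeg_eq_one
    (hN.indeg_eq_one (hN.snd_mem h₁.1) (hN.ne_root_of_arc h₁.1) h₁.2.2) h₁.1 h₂.1

theorem not_treeArc_of_isCompRoot (hN : N.IsBinaryNet) {p ρ : V} (hρ : N.IsCompRoot ρ) :
    ¬ N.TreeArc p ρ := by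
  rintro ⟨hpρ, hp, -⟩
  rcases hρ.2.2 with rfl | ⟨w, hw, hwρ⟩
  · exact hN.ne_root_of_arc hpρ rfl
  · have hρ1 := hN.indeg_eq_one hρ.1 (hN.ne_root_of_arc hwρ) hρ.2.1
    exact hp (eq_of_indeg_eq_one hρ1 hwρ hpρ ▸ hw)

theorem eq_of_reach_of_isCompRoot (hN : N.IsBinaryNet) {ρ u : V} (hu : N.IsCompRoot u)
    (h : N.Reach ρ u) : ρ = u := by
  rcases h.cases_tail with rfl | ⟨_, _, hcu⟩
  · rfl
  · exact absurd hcu (hN.not_treeArc_of_isCompRoot hu)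

theorem eq_of_mem_comp (hN : N.IsBinaryNet) {ρ₁ ρ₂ u : V} (hρ₁ : N.IsCompRoot ρ₁)
    (hρ₂ : N.IsCompRoot ρ₂) (hu₁ : u ∈ N.comp ρ₁) (hu₂ : u ∈ N.comp ρ₂) : ρ₁ = ρ₂ := by
  -- tree arcs are left unique, so the vertices reaching `u` are totally ordered by `Reach`
  rcases Relation.ReflTransGen.total_of_right_unique (r := Function.swap N.TreeArc)
      (fun _ _ _ h₁ h₂ => hN.treeArc_leftUnique h₁ h₂)
      (Relation.reflTransGen_swap.2 (mem_comp.1 hu₁).2)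
      (Relation.reflTransGen_swap.2 (mem_comp.1 hu₂).2) with h | h
  · exact (hN.eq_of_reach_of_isCompRoot hρ₁ (Relation.reflTransGen_swap.1 h)).symm
  · exact hN.eq_of_reach_of_isCompRoot hρ₂ (Relation.reflTransGen_swap.1 h)

theorem mem_comp_of_verifies (hN : N.IsBinaryNet) {ρ : V} (hρ : ¬ N.IsRetic ρ)
    (hsplit : ∀ w, N.IsRetic w → ∀ p ∈ N.comp ρ, ∀ q ∈ N.comp ρ, N.Arc p w → N.Arc q w → p = q)
    {u : V} (hu : u ∈ N.verts) (h : N.Verifies u ρ) : u ∈ N.comp ρ := by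
  induction u using hN.wellFounded_arc.induction with
  | _ u ih =>
  by_cases huρ : u = ρ
  · exact huρ ▸ self_mem_comp hu
  have hur : u ≠ N.root := fun hur => huρ ((hur ▸ h).eq_root.trans hur.symm).symm
  have hparent {p : V} (hpu : N.Arc p u) : p ∈ N.comp ρ :=
    ih p hpu (hN.fst_mem hpu) (h.of_arc (Ne.symm huρ) hpu)
  by_cases hret : N.IsRetic u
  · obtain ⟨p, hpu⟩ := exists_arc_of_indeg_ne_zero (hret.2.1 ▸ two_ne_zero)
    obtain ⟨q, hqp, hqu⟩ := exists_arc_ne_of_two_le_indeg hret.2.1.ge p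
    exact absurd (hsplit u hret q (hparent hqu) p (hparent hpu) hqu hpu) hqp
  · obtain ⟨p, hpu⟩ := exists_arc_of_indeg_ne_zero (hN.indeg_eq_one hu hur hret ▸ one_ne_zero)
    have hp := hparent hpu
    exact hN.mem_comp_of_treeArc hp ⟨hpu, not_isRetic_of_mem_comp hρ hp, hret⟩

theorem two_le_card_comp (hN : N.IsBinaryNet) (hrv : N.ReticVisible) (hX : N.leaves.Nonempty)
    {ρ : V} (hρ : N.IsCompRoot ρ) (hb : Disjoint (N.comp ρ) N.leaves) : 2 ≤ (N.comp ρ).card := by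
  by_contra! hlt
  have hsplit : ∀ w, N.IsRetic w → ∀ p ∈ N.comp ρ, ∀ q ∈ N.comp ρ, N.Arc p w → N.Arc q w →
      p = q := fun _ _ p hp q hq _ _ => Finset.card_le_one.1 (by omega) p hp q hq
  obtain ⟨ℓ, hℓ, hver⟩ : ∃ ℓ ∈ N.leaves, N.Verifies ℓ ρ := by
    rcases hρ.2.2 with rfl | ⟨w, hw, hwρ⟩
    · obtain ⟨ℓ, hℓ⟩ := hX
      exact ⟨ℓ, hℓ, verifies_root ℓ⟩
    · obtain ⟨ℓ, ⟨hℓ, hℓ0⟩, hver⟩ := hrv w hw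
      have hℓw : ℓ ≠ w := fun h => by simp [h, hw.2.2] at hℓ0
      exact ⟨ℓ, Finset.mem_filter.2 ⟨hℓ, hℓ0⟩, hver.of_outdeg_eq_one hw.2.2 hwρ hℓw⟩
  have hℓρ := hN.mem_comp_of_verifies hρ.2.1 hsplit (Finset.mem_filter.1 hℓ).1 hver
  exact Finset.disjoint_left.1 hb hℓρ hℓ

theorem card_comp_add_one_le (hN : N.IsBinaryNet) {ρ : V} (hρ : N.IsCompRoot ρ)
    (hb : Disjoint (N.comp ρ) N.leaves) :
    (N.comp ρ).card + 1 ≤ (N.reticArcs.filter fun e => e.1 ∈ N.comp ρ).card := by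
  set C := N.comp ρ
  have hnr {u : V} (hu : u ∈ C) : ¬ N.IsRetic u := not_isRetic_of_mem_comp hρ.2.1 hu
  have hout : (N.arcs.filter fun e => e.1 ∈ C).card = 2 * C.card := by
    rw [card_filter_fst_mem_eq_sum_outdeg, Finset.sum_congr rfl (g := fun _ => 2) fun u hu =>
      hN.outdeg_eq_two (mem_comp.1 hu).1 (hnr hu) fun h0 =>
        Finset.disjoint_left.1 hb hu (Finset.mem_filter.2 ⟨(mem_comp.1 hu).1, h0⟩),
      Finset.sum_const, smul_eq_mul, mul_comm]
  have hinner : (N.arcs.filter fun e => e.1 ∈ C ∧ e.2 ∈ C).card ≤ (C.erase ρ).card := by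
    refine Finset.card_le_card_of_injOn Prod.snd (fun e he => ?_) fun e₁ he₁ e₂ he₂ heq => ?_
    · obtain ⟨harc, h₁, h₂⟩ := Finset.mem_filter.1 he
      refine Finset.mem_erase.2 ⟨fun h => ?_, h₂⟩
      exact hN.not_treeArc_of_isCompRoot hρ (h ▸ ⟨harc, hnr h₁, hnr h₂⟩ : N.TreeArc e.1 ρ)
    · obtain ⟨harc₁, h₁₁, h₁₂⟩ := Finset.mem_filter.1 he₁
      obtain ⟨harc₂, h₂₁, h₂₂⟩ := Finset.mem_filter.1 he₂
      have ht₂ : N.TreeArc e₂.1 e₁.2 := heq ▸ ⟨harc₂, hnr h₂₁, hnr h₂₂⟩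
      exact Prod.ext (hN.treeArc_leftUnique ⟨harc₁, hnr h₁₁, hnr h₁₂⟩ ht₂) heq
  have hcover : (N.arcs.filter fun e => e.1 ∈ C) ⊆
      (N.arcs.filter fun e => e.1 ∈ C ∧ e.2 ∈ C) ∪ N.reticArcs.filter fun e => e.1 ∈ C := by
    intro e he
    obtain ⟨harc, h₁⟩ := Finset.mem_filter.1 he
    by_cases h₂ : N.IsRetic e.2
    · exact Finset.mem_union_right _
        (Finset.mem_filter.2 ⟨Finset.mem_filter.2 ⟨harc, mem_retics.2 h₂⟩, h₁⟩)
    · exact Finset.mem_union_left _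
        (Finset.mem_filter.2 ⟨harc, h₁, hN.mem_comp_of_treeArc h₁ ⟨harc, hnr h₁, h₂⟩⟩)
  have hle := (Finset.card_le_card hcover).trans (Finset.card_union_le _ _)
  have hC : (C.erase ρ).card + 1 = C.card := Finset.card_erase_add_one (self_mem_comp hρ.1)
  omega

theorem card_retics_add_one_le (hN : N.IsBinaryNet) (hrv : N.ReticVisible) :
    N.retics.card + 1 ≤ N.compRoots.card := by
  have hroot : N.root ∈ N.compRoots :=
    mem_compRoots.2 ⟨hN.root_mem, hN.not_isRetic_root, .inl rfl⟩
  have hle : N.retics.card ≤ (N.compRoots.erase N.root).card := by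
    refine Finset.card_le_card_of_forall_subsingleton N.Arc (fun w hw => ?_) fun ρ hρ => ?_
    · have hw := mem_retics.1 hw
      obtain ⟨ρ, hwρ⟩ := exists_arc_of_outdeg_ne_zero (hw.2.2 ▸ one_ne_zero)
      have hρ : N.IsCompRoot ρ :=
        ⟨hN.snd_mem hwρ, hN.not_isRetic_of_arc hrv hw hwρ, .inr ⟨w, hw, hwρ⟩⟩
      exact ⟨ρ, Finset.mem_erase.2 ⟨hN.ne_root_of_arc hwρ, mem_compRoots.2 hρ⟩, hwρ⟩
    · obtain ⟨hρr, hρ⟩ := Finset.mem_erase.1 hρ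
      have hρ := mem_compRoots.1 hρ
      exact fun w₁ hw₁ w₂ hw₂ =>
        eq_of_indeg_eq_one (hN.indeg_eq_one hρ.1 hρr hρ.2.1) hw₁.2 hw₂.2
  rw [← Finset.card_erase_add_one hroot]
  omega

theorem card_compRoots_not_disjoint_le (hN : N.IsBinaryNet) :
    (N.compRoots.filter fun ρ => ¬ Disjoint (N.comp ρ) N.leaves).card ≤ N.leaves.card := by
  refine Finset.card_le_card_of_forall_subsingleton (fun ρ ℓ => ℓ ∈ N.comp ρ)
    (fun ρ hρ => ?_) fun ℓ _ ρ₁ h₁ ρ₂ h₂ => ?_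
  · obtain ⟨ℓ, h₁, h₂⟩ := Finset.not_disjoint_iff.1 (Finset.mem_filter.1 hρ).2
    exact ⟨ℓ, h₂, h₁⟩
  · exact hN.eq_of_mem_comp (mem_compRoots.1 (Finset.mem_filter.1 h₁.1).1)
      (mem_compRoots.1 (Finset.mem_filter.1 h₂.1).1) h₁.2 h₂.2

theorem three_mul_card_compRoots_disjoint_le (hN : N.IsBinaryNet) (hrv : N.ReticVisible)
    (hX : N.leaves.Nonempty) :
    3 * (N.compRoots.filter fun ρ => Disjoint (N.comp ρ) N.leaves).card ≤
      2 * N.retics.card := by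
  have hcard : N.reticArcs.card = 2 * N.retics.card := by
    rw [reticArcs, card_filter_snd_mem_eq_sum_indeg,
      Finset.sum_congr rfl (g := fun _ => 2) fun v hv => (mem_retics.1 hv).2.1,
      Finset.sum_const, smul_eq_mul, mul_comm]
  -- double count the pairs `(ρ, e)` of a leafless component and a reticulation arc leaving it
  have := Finset.card_mul_le_card_mul (fun ρ (e : V × V) => e.1 ∈ N.comp ρ)
    (s := N.compRoots.filter fun ρ => Disjoint (N.comp ρ) N.leaves) (t := N.reticArcs)
    (m := 3) (n := 1) (fun ρ hρ => ?_) fun e _ => Finset.card_le_one.2 fun ρ₁ h₁ ρ₂ h₂ => ?_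
  · omega
  · obtain ⟨hρ, hb⟩ := Finset.mem_filter.1 hρ
    have hρ := mem_compRoots.1 hρ
    have h₂ := hN.two_le_card_comp hrv hX hρ hb
    have h₃ := hN.card_comp_add_one_le hρ hb
    rw [Finset.bipartiteAbove]
    omega
  · rw [Finset.mem_bipartiteBelow] at h₁ h₂
    exact hN.eq_of_mem_comp (mem_compRoots.1 (Finset.mem_filter.1 h₁.1).1)
      (mem_compRoots.1 (Finset.mem_filter.1 h₂.1).1) h₁.2 h₂.2

end IsBinaryNet

end Net

/-- A reticulation-visible phylogenetic network with `m ≥ 1` leaves has at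
most `8m - 7` vertices in total. -/
theorem stmt_0 {V : Type} [DecidableEq V] (N : Net V)
    (hphylo : N.IsPhylo) (hrv : N.ReticVisible)
    (hm : 1 ≤ N.leaves.card) :
    N.verts.card ≤ 8 * N.leaves.card - 7 := by
  rcases eq_or_ne N.verts.card 1 with hn | hn
  · omega
  have hN := hphylo.isBinaryNet hn
  have hV := hN.card_verts_add_one
  have hR := hN.card_retics_add_one_le hrv
  have hroots := Finset.card_filter_add_card_filter_not (s := N.compRoots)
    fun ρ => Disjoint (N.comp ρ) N.leaves
  have hleafy := hN.card_compRoots_not_disjoint_le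
  have hbarren := hN.three_mul_card_compRoots_disjoint_le hrv (Finset.card_pos.1 hm)
  omega
end

section
/- Let N be a reticulation-visible phylogenetic network and let v be a reticulation in N. Then neither parent of v is a reticulation. -/
variable {V : Type} [DecidableEq V]

namespace Net

variable {N : Net V}

lemma rtg_of_path {a b : V} {l : List V} (h : N.IsPathList a b l) :
    Relation.ReflTransGen N.Arc a b := by
  induction h with
  | nil => exact .refl
  | cons ha _ ih => exact .trans (.single ha) ih

lemma path_of_rtg {a b : V} (h : Relation.ReflTransGen N.Arc a b) :
    ∃ l, N.IsPathList a b l := by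
  induction h using Relation.ReflTransGen.head_induction_on with
  | refl => exact ⟨[b], .nil b⟩
  | head ha _ ih => obtain ⟨l, hl⟩ := ih; exact ⟨_, .cons ha hl⟩

lemma path_append {a b c d : V} {l1 l2 : List V} (h1 : N.IsPathList a b l1)
    (ha : N.Arc b c) (h2 : N.IsPathList c d l2) :
    N.IsPathList a d (l1 ++ l2) := by
  induction h1 with
  | nil => exact .cons ha h2
  | cons h _ ih => exact .cons h (ih ha)

lemma rtg_of_mem {a b u : V} {l : List V} (h : N.IsPathList a b l) (hu : u ∈ l) :
    Relation.ReflTransGen N.Arc a u := by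
  induction h with
  | nil c => rw [List.mem_singleton] at hu; subst hu; exact .refl
  | cons ha _ ih =>
    rcases List.mem_cons.1 hu with h | h
    · subst h; exact .refl
    · exact .trans (.single ha) (ih h)

lemma suffix_of_mem {a b u : V} {l : List V} (h : N.IsPathList a b l) (hu : u ∈ l) :
    ∃ l', N.IsPathList u b l' := by
  induction h with
  | nil c => rw [List.mem_singleton] at hu; subst hu; exact ⟨_, .nil _⟩
  | cons ha hp ih =>
    rcases List.mem_cons.1 hu with h | h
    · subst h; exact ⟨_, .cons ha hp⟩
    · exact ih h

lemma path_step {a b : V} {l : List V} (h : N.IsPathList a b l) (hab : a ≠ b) :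
    ∃ x l', N.Arc a x ∧ N.IsPathList x b l' := by
  cases h with
  | nil => exact absurd rfl hab
  | cons ha hp => exact ⟨_, _, ha, hp⟩

lemma out_unique {u v x : V} (hout : N.outdeg u = 1) (h1 : N.Arc u v)
    (h2 : N.Arc u x) : x = v := by
  have hm1 : (u, v) ∈ N.arcs.filter (fun e => e.1 = u) := Finset.mem_filter.2 ⟨h1, rfl⟩
  have hm2 : (u, x) ∈ N.arcs.filter (fun e => e.1 = u) := Finset.mem_filter.2 ⟨h2, rfl⟩
  obtain ⟨e, he⟩ := Finset.card_eq_one.1 hout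
  rw [he, Finset.mem_singleton] at hm1 hm2
  exact congrArg Prod.snd (hm2.trans hm1.symm)

lemma other_parent {u v : V} (hin : N.indeg v = 2) (h : N.Arc u v) :
    ∃ w, w ≠ u ∧ N.Arc w v := by
  have hlt : 1 < (N.arcs.filter (fun e => e.2 = v)).card := lt_of_lt_of_eq Nat.one_lt_two hin.symm
  obtain ⟨e, hme, hne⟩ := Finset.exists_mem_ne hlt (u, v)
  obtain ⟨hea, he2⟩ := Finset.mem_filter.1 hme
  refine ⟨e.1, fun h' => hne (Prod.ext h' he2), ?_⟩
  show (e.1, v) ∈ N.arcs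
  rw [← he2]
  simpa using hea

end Net

/-- In a reticulation-visible phylogenetic network, no parent of a
reticulation is itself a reticulation. -/
theorem stmt_4 {V : Type} [DecidableEq V] (N : Net V)
    (hphylo : N.IsPhylo) (hrv : N.ReticVisible)
    (v u : V) (hv : N.IsRetic v) (hu : N.Arc u v) :
    ¬ N.IsRetic u := by
  intro hu_ret
  obtain ⟨huV, huin, huout⟩ := hu_ret
  obtain ⟨hroot, harcV, hacyc, hreach, -⟩ := hphylo
  obtain ⟨ℓ, hℓleaf, hver⟩ := hrv u ⟨huV, huin, huout⟩
  have huℓ : u ≠ ℓ := by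
    intro h; subst h
    rw [hℓleaf.2] at huout
    exact absurd huout (by norm_num)
  obtain ⟨l, hl⟩ := Net.path_of_rtg (hreach ℓ hℓleaf.1)
  have hul : u ∈ l := hver l hl
  obtain ⟨l', hl'⟩ := Net.suffix_of_mem hl hul
  obtain ⟨x, lx, hax, hpx⟩ := Net.path_step hl' huℓ
  have hxv : x = v := Net.out_unique huout hu hax
  rw [hxv] at hpx
  obtain ⟨w, hwu, hwarc⟩ := Net.other_parent hv.2.1 hu
  have hwV : w ∈ N.verts := (harcV _ hwarc).1
  obtain ⟨lw, hlw⟩ := Net.path_of_rtg (hreach w hwV)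
  have hbig := Net.path_append hlw hwarc hpx
  rcases List.mem_append.1 (hver _ hbig) with hm | hm
  · obtain ⟨l2, hl2⟩ := Net.suffix_of_mem hlw hm
    obtain ⟨y, l3, hay, hpy⟩ := Net.path_step hl2 (Ne.symm hwu)
    have hyv : y = v := Net.out_unique huout hu hay
    rw [hyv] at hpy
    exact hacyc v (Relation.TransGen.tail' (Net.rtg_of_path hpy) hwarc)
  · exact hacyc v (Relation.TransGen.tail' (Net.rtg_of_mem hpx hm) hu)
end

section
/- Let N be a reticulation-visible phylogenetic network on X containing a cherry {a, b}, and let N' be obtained from N by reducing this cherry (deleting a and b with their incident arcs, and relabelling their common parent, now a leaf, by a new element). Then N' is a reticulation-visible phylogenetic network on (X \ {a,b}) ∪ {new label}. -/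
variable {V : Type} [DecidableEq V]

/-! Since `a` and `b` are leaves whose only in-arc comes from `p`, and `p` has no children
besides `a` and `b`, deleting `a` and `b` changes no degree except the out-degree of `p`, which
drops from 2 to 0: `p` becomes a leaf and every other vertex keeps its type. Paths of the reduced
network are paths of `N`, and a path to `p` extends to a path to `a`; hence a reticulation
verified by `a` (or `b`) in `N` is verified by `p` after the reduction. -/

namespace Net

variable {N M : Net V} {a b p u v w ℓ : V}

theorem outdeg_eq_zero_iff : N.outdeg v = 0 ↔ ∀ w, ¬ N.Arc v w := by
  simp only [outdeg, Finset.card_eq_zero, Finset.filter_eq_empty_iff, Prod.forall, Arc]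
  exact ⟨fun h w hw => h v w hw rfl, fun h x y hxy hx => h y (hx ▸ hxy)⟩

theorem indeg_eq_zero_iff : N.indeg v = 0 ↔ ∀ u, ¬ N.Arc u v := by
  simp only [indeg, Finset.card_eq_zero, Finset.filter_eq_empty_iff, Prod.forall, Arc]
  exact ⟨fun h u hu => h u v hu rfl, fun h x y hxy hy => h x (hy ▸ hxy)⟩

theorem ne_of_arc_of_outdeg_eq_zero (ha : N.outdeg a = 0) (h : N.Arc u w) : u ≠ a := by
  rintro rfl
  exact outdeg_eq_zero_iff.mp ha w h

theorem eq_of_arc_of_indeg_le_one (h : N.indeg v ≤ 1) (hu : N.Arc u v) (hw : N.Arc w v) :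
    u = w := by
  have := Finset.card_le_one.mp h (u, v) (by simpa [Arc] using hu) (w, v) (by simpa [Arc] using hw)
  simpa using this

theorem card_le_outdeg {s : Finset V} (hs : ∀ w ∈ s, N.Arc v w) : s.card ≤ N.outdeg v :=
  Finset.card_le_card_of_injOn (fun w => (v, w))
    (fun w hw => Finset.mem_filter.mpr ⟨hs w hw, rfl⟩) (fun _ _ _ _ h => (Prod.mk.inj h).2)

theorem two_le_outdeg (hab : a ≠ b) (ha : N.Arc v a) (hb : N.Arc v b) : 2 ≤ N.outdeg v :=
  Finset.card_pair hab ▸ card_le_outdeg (by simp [ha, hb])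

theorem eq_or_eq_of_outdeg_le_two (h : N.outdeg v ≤ 2) (hab : a ≠ b) (ha : N.Arc v a)
    (hb : N.Arc v b) (hw : N.Arc v w) : w = a ∨ w = b := by
  by_contra! hne
  have h3 := card_le_outdeg (N := N) (v := v) (s := {a, b, w}) (by simp [ha, hb, hw])
  rw [Finset.card_eq_three.mpr ⟨a, b, w, hab, hne.1.symm, hne.2.symm, rfl⟩] at h3
  omega

theorem mem_leaves_iff : v ∈ N.leaves ↔ N.IsLeaf v := by
  simp [leaves, IsLeaf]

theorem eq_of_reflTransGen_of_outdeg_eq_zero (hu : N.outdeg u = 0)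
    (h : Relation.ReflTransGen N.Arc u v) : v = u := by
  rcases Relation.ReflTransGen.cases_head_iff.mp h with rfl | ⟨w, huw, -⟩
  · rfl
  · exact absurd huw (outdeg_eq_zero_iff.mp hu w)

theorem IsPathList.mono (h : N.arcs ⊆ M.arcs) {l : List V} (hl : N.IsPathList u v l) :
    M.IsPathList u v l := by
  induction hl with
  | nil x => exact .nil x
  | cons huw _ ih => exact .cons (h huw) ih

theorem IsPathList.concat {l : List V} (hl : N.IsPathList u v l) (hvw : N.Arc v w) :
    N.IsPathList u w (l ++ [w]) := by
  induction hl with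
  | nil x => exact .cons hvw (.nil w)
  | cons huw _ ih => exact .cons huw (ih hvw)

theorem Verifies.mono (h : N.Verifies ℓ v) (harcs : M.arcs ⊆ N.arcs) (hroot : M.root = N.root) :
    M.Verifies ℓ v := fun l hl => h l (hroot ▸ hl.mono harcs)

theorem Verifies.of_arc_s5 (h : N.Verifies ℓ v) (hpℓ : N.Arc p ℓ) (hv : v ≠ ℓ) :
    N.Verifies p v := by
  intro l hl
  simpa [hv] using h _ (hl.concat hpℓ)

theorem arcs_eq_empty_of_card_verts_eq_one
    (hends : ∀ e ∈ N.arcs, e.1 ∈ N.verts ∧ e.2 ∈ N.verts)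
    (hacyc : ∀ v : V, ¬ Relation.TransGen N.Arc v v) (hcard : N.verts.card = 1) :
    N.arcs = ∅ := by
  obtain ⟨x, hx⟩ := Finset.card_eq_one.mp hcard
  refine Finset.eq_empty_of_forall_notMem fun ⟨u, w⟩ he => ?_
  obtain ⟨hu, hw⟩ := hends _ he
  simp only [hx, Finset.mem_singleton] at hu hw
  subst hu hw
  exact hacyc _ (.single he)

theorem IsPhylo.degrees (hN : N.IsPhylo) (hcard : N.verts.card ≠ 1) :
    N.indeg N.root = 0 ∧ N.outdeg N.root = 2 ∧
    ∀ v ∈ N.verts, v ≠ N.root →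
      (N.indeg v = 1 ∧ N.outdeg v = 0) ∨
      (N.indeg v = 1 ∧ N.outdeg v = 2) ∨
      (N.indeg v = 2 ∧ N.outdeg v = 1) := by
  simpa [hcard] using hN.2.2.2.2

theorem IsPhylo.outdeg_le_two (hN : N.IsPhylo) (hcard : N.verts.card ≠ 1) (hv : v ∈ N.verts) :
    N.outdeg v ≤ 2 := by
  obtain ⟨-, hroot, hcases⟩ := hN.degrees hcard
  by_cases hvr : v = N.root
  · subst hvr; omega
  · rcases hcases v hv hvr with h | h | h <;> omega

theorem IsPhylo.ne_root_of_arc (hN : N.IsPhylo) (hcard : N.verts.card ≠ 1) (huv : N.Arc u v) :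
    v ≠ N.root := by
  rintro rfl
  exact indeg_eq_zero_iff.mp (hN.degrees hcard).1 _ huv

theorem IsPhylo.indeg_eq_one_of_outdeg_ne_one (hN : N.IsPhylo) (hcard : N.verts.card ≠ 1)
    (hv : v ∈ N.verts) (hvr : v ≠ N.root) (h : N.outdeg v ≠ 1) : N.indeg v = 1 := by
  rcases (hN.degrees hcard).2.2 v hv hvr with h' | h' | h' <;> omega

def reduceCherry (N : Net V) (a b : V) : Net V :=
  ⟨(N.verts.erase a).erase b,
   N.arcs.filter (fun e => e.1 ≠ a ∧ e.1 ≠ b ∧ e.2 ≠ a ∧ e.2 ≠ b),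
   N.root⟩

@[simp]
theorem mem_verts_reduceCherry : v ∈ (N.reduceCherry a b).verts ↔ v ≠ b ∧ v ≠ a ∧ v ∈ N.verts := by
  simp [reduceCherry]

@[simp]
theorem arc_reduceCherry_iff :
    (N.reduceCherry a b).Arc u v ↔ N.Arc u v ∧ u ≠ a ∧ u ≠ b ∧ v ≠ a ∧ v ≠ b :=
  Finset.mem_filter

@[simp]
theorem root_reduceCherry : (N.reduceCherry a b).root = N.root := rfl

theorem arcs_reduceCherry_subset : (N.reduceCherry a b).arcs ⊆ N.arcs :=
  Finset.filter_subset _ _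

theorem indeg_reduceCherry (ha : N.outdeg a = 0) (hb : N.outdeg b = 0) (hva : v ≠ a)
    (hvb : v ≠ b) : (N.reduceCherry a b).indeg v = N.indeg v := by
  unfold indeg reduceCherry
  rw [Finset.filter_filter]
  refine congrArg _ (Finset.filter_congr fun ⟨x, y⟩ h => ⟨And.right, fun hy => ?_⟩)
  subst hy
  exact ⟨⟨ne_of_arc_of_outdeg_eq_zero ha h, ne_of_arc_of_outdeg_eq_zero hb h, hva, hvb⟩, rfl⟩

theorem outdeg_reduceCherry (ha : N.outdeg a = 0) (hb : N.outdeg b = 0) (hva : ¬ N.Arc v a)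
    (hvb : ¬ N.Arc v b) : (N.reduceCherry a b).outdeg v = N.outdeg v := by
  unfold outdeg reduceCherry
  rw [Finset.filter_filter]
  refine congrArg _ (Finset.filter_congr fun ⟨x, y⟩ h => ⟨And.right, fun hx => ?_⟩)
  subst hx
  refine ⟨⟨ne_of_arc_of_outdeg_eq_zero ha h, ne_of_arc_of_outdeg_eq_zero hb h, ?_, ?_⟩, rfl⟩
  · rintro rfl; exact hva h
  · rintro rfl; exact hvb h

theorem outdeg_reduceCherry_eq_zero (h : ∀ w, N.Arc v w → w = a ∨ w = b) :
    (N.reduceCherry a b).outdeg v = 0 := by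
  refine outdeg_eq_zero_iff.mpr fun w hw => ?_
  obtain ⟨hvw, -, -, hwa, hwb⟩ := arc_reduceCherry_iff.mp hw
  exact (h w hvw).elim hwa hwb

theorem reflTransGen_reduceCherry (ha : N.outdeg a = 0) (hb : N.outdeg b = 0)
    (h : Relation.ReflTransGen N.Arc u v) (hva : v ≠ a) (hvb : v ≠ b) :
    Relation.ReflTransGen (N.reduceCherry a b).Arc u v := by
  induction h with
  | refl => exact .refl
  | @tail x y _ hxy ih =>
    have hxa := ne_of_arc_of_outdeg_eq_zero ha hxy
    have hxb := ne_of_arc_of_outdeg_eq_zero hb hxy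
    exact (ih hxa hxb).tail (arc_reduceCherry_iff.mpr ⟨hxy, hxa, hxb, hva, hvb⟩)

structure IsCherry (N : Net V) (a b p : V) : Prop where
  ne : a ≠ b
  isLeaf_left : N.IsLeaf a
  isLeaf_right : N.IsLeaf b
  arc_left : N.Arc p a
  arc_right : N.Arc p b

namespace IsCherry

theorem symm (hc : N.IsCherry a b p) : N.IsCherry b a p :=
  ⟨hc.ne.symm, hc.isLeaf_right, hc.isLeaf_left, hc.arc_right, hc.arc_left⟩

theorem card_verts_ne_one (hc : N.IsCherry a b p) : N.verts.card ≠ 1 :=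
  (Finset.one_lt_card.mpr ⟨a, hc.isLeaf_left.1, b, hc.isLeaf_right.1, hc.ne⟩).ne'

theorem parent_ne_left (hc : N.IsCherry a b p) : p ≠ a :=
  ne_of_arc_of_outdeg_eq_zero hc.isLeaf_left.2 hc.arc_left

theorem parent_mem (hN : N.IsPhylo) (hc : N.IsCherry a b p) : p ∈ N.verts :=
  (hN.2.1 _ hc.arc_left).1

theorem left_ne_root (hN : N.IsPhylo) (hc : N.IsCherry a b p) : a ≠ N.root :=
  hN.ne_root_of_arc hc.card_verts_ne_one hc.arc_left

theorem eq_parent_of_arc_left (hN : N.IsPhylo) (hc : N.IsCherry a b p) (h : N.Arc u a) :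
    u = p := by
  have ha : N.indeg a = 1 := hN.indeg_eq_one_of_outdeg_ne_one hc.card_verts_ne_one
    hc.isLeaf_left.1 (hc.left_ne_root hN) (by simp [hc.isLeaf_left.2])
  exact eq_of_arc_of_indeg_le_one ha.le h hc.arc_left

theorem outdeg_parent (hN : N.IsPhylo) (hc : N.IsCherry a b p) : N.outdeg p = 2 :=
  le_antisymm (hN.outdeg_le_two hc.card_verts_ne_one (hc.parent_mem hN))
    (two_le_outdeg hc.ne hc.arc_left hc.arc_right)

theorem eq_or_eq_of_arc_parent (hN : N.IsPhylo) (hc : N.IsCherry a b p) (h : N.Arc p w) :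
    w = a ∨ w = b :=
  eq_or_eq_of_outdeg_le_two (hc.outdeg_parent hN).le hc.ne hc.arc_left hc.arc_right h

theorem indeg_reduceCherry_of_mem (hc : N.IsCherry a b p) (hv : v ∈ (N.reduceCherry a b).verts) :
    (N.reduceCherry a b).indeg v = N.indeg v :=
  have ⟨hvb, hva, _⟩ := mem_verts_reduceCherry.mp hv
  indeg_reduceCherry hc.isLeaf_left.2 hc.isLeaf_right.2 hva hvb

theorem outdeg_reduceCherry_of_ne (hN : N.IsPhylo) (hc : N.IsCherry a b p) (hv : v ≠ p) :
    (N.reduceCherry a b).outdeg v = N.outdeg v :=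
  outdeg_reduceCherry hc.isLeaf_left.2 hc.isLeaf_right.2
    (fun h => hv (hc.eq_parent_of_arc_left hN h)) (fun h => hv (hc.symm.eq_parent_of_arc_left hN h))

theorem outdeg_reduceCherry_parent (hN : N.IsPhylo) (hc : N.IsCherry a b p) :
    (N.reduceCherry a b).outdeg p = 0 :=
  outdeg_reduceCherry_eq_zero fun _ => hc.eq_or_eq_of_arc_parent hN

theorem isLeaf_reduceCherry (hN : N.IsPhylo) (hc : N.IsCherry a b p) :
    (N.reduceCherry a b).IsLeaf p :=
  ⟨mem_verts_reduceCherry.mpr ⟨hc.symm.parent_ne_left, hc.parent_ne_left, hc.parent_mem hN⟩,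
    hc.outdeg_reduceCherry_parent hN⟩

theorem leaves_reduceCherry (hN : N.IsPhylo) (hc : N.IsCherry a b p) :
    (N.reduceCherry a b).leaves = (N.leaves.erase a).erase b ∪ {p} := by
  ext v
  by_cases hvp : v = p
  · subst hvp
    simp only [Finset.mem_union, Finset.mem_singleton, or_true, iff_true]
    exact mem_leaves_iff.mpr (hc.isLeaf_reduceCherry hN)
  · simp only [leaves, Finset.mem_filter, mem_verts_reduceCherry, Finset.mem_union,
      Finset.mem_singleton, Finset.mem_erase, hvp, or_false, hc.outdeg_reduceCherry_of_ne hN hvp]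
    tauto

theorem root_mem_reduceCherry (hN : N.IsPhylo) (hc : N.IsCherry a b p) :
    N.root ∈ (N.reduceCherry a b).verts :=
  mem_verts_reduceCherry.mpr
    ⟨(hc.symm.left_ne_root hN).symm, (hc.left_ne_root hN).symm, hN.1⟩

theorem ancestor_reduceCherry (hN : N.IsPhylo) (hc : N.IsCherry a b p)
    (hv : v ∈ (N.reduceCherry a b).verts) :
    (N.reduceCherry a b).Ancestor (N.reduceCherry a b).root v :=
  have ⟨hvb, hva, hv⟩ := mem_verts_reduceCherry.mp hv
  reflTransGen_reduceCherry hc.isLeaf_left.2 hc.isLeaf_right.2 (hN.2.2.2.1 v hv) hva hvb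

/-- Otherwise every vertex of the reduced network would descend from its new leaf `p`. -/
theorem parent_ne_root (hN : N.IsPhylo) (hc : N.IsCherry a b p)
    (hcard : (N.reduceCherry a b).verts.card ≠ 1) : p ≠ N.root := by
  rintro rfl
  refine hcard (Finset.card_eq_one.mpr ⟨_, Finset.eq_singleton_iff_unique_mem.mpr
    ⟨(hc.isLeaf_reduceCherry hN).1, fun v hv => ?_⟩⟩)
  exact eq_of_reflTransGen_of_outdeg_eq_zero (hc.outdeg_reduceCherry_parent hN)
    (hc.ancestor_reduceCherry hN hv)

theorem degrees_reduceCherry (hN : N.IsPhylo) (hc : N.IsCherry a b p)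
    (hcard : (N.reduceCherry a b).verts.card ≠ 1) :
    let N' := N.reduceCherry a b
    N'.indeg N'.root = 0 ∧ N'.outdeg N'.root = 2 ∧
    ∀ v ∈ N'.verts, v ≠ N'.root →
      (N'.indeg v = 1 ∧ N'.outdeg v = 0) ∨
      (N'.indeg v = 1 ∧ N'.outdeg v = 2) ∨
      (N'.indeg v = 2 ∧ N'.outdeg v = 1) := by
  obtain ⟨hin, hout, hcases⟩ := hN.degrees hc.card_verts_ne_one
  refine ⟨?_, ?_, fun v hv hvr => ?_⟩
  · rwa [root_reduceCherry, hc.indeg_reduceCherry_of_mem (hc.root_mem_reduceCherry hN)]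
  · rwa [root_reduceCherry, hc.outdeg_reduceCherry_of_ne hN (hc.parent_ne_root hN hcard).symm]
  rw [hc.indeg_reduceCherry_of_mem hv]
  by_cases hvp : v = p
  · subst hvp
    refine .inl ⟨hN.indeg_eq_one_of_outdeg_ne_one hc.card_verts_ne_one (hc.parent_mem hN) hvr
      (by simp [hc.outdeg_parent hN]), hc.outdeg_reduceCherry_parent hN⟩
  · rw [hc.outdeg_reduceCherry_of_ne hN hvp]
    exact hcases v (mem_verts_reduceCherry.mp hv).2.2 hvr

theorem isPhylo_reduceCherry (hN : N.IsPhylo) (hc : N.IsCherry a b p) :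
    (N.reduceCherry a b).IsPhylo := by
  have hends : ∀ e ∈ (N.reduceCherry a b).arcs,
      e.1 ∈ (N.reduceCherry a b).verts ∧ e.2 ∈ (N.reduceCherry a b).verts := by
    rintro ⟨u, w⟩ h
    obtain ⟨huw, hua, hub, hwa, hwb⟩ := arc_reduceCherry_iff.mp h
    simp [hua, hub, hwa, hwb, hN.2.1 _ huw]
  have hacyc : ∀ v, ¬ Relation.TransGen (N.reduceCherry a b).Arc v v :=
    fun v h => hN.2.2.1 v (.mono (fun _ _ h => arcs_reduceCherry_subset h) _ _ h)
  refine ⟨hc.root_mem_reduceCherry hN, hends, hacyc, fun v => hc.ancestor_reduceCherry hN, ?_⟩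
  split_ifs with hcard
  · exact arcs_eq_empty_of_card_verts_eq_one hends hacyc hcard
  · exact hc.degrees_reduceCherry hN hcard

theorem reticVisible_reduceCherry (hN : N.IsPhylo) (hc : N.IsCherry a b p)
    (hrv : N.ReticVisible) : (N.reduceCherry a b).ReticVisible := by
  rintro v ⟨hv, hin, hout⟩
  have hvp : v ≠ p := by
    rintro rfl
    simp [hc.outdeg_reduceCherry_parent hN] at hout
  obtain ⟨hvb, hva, hvN⟩ := mem_verts_reduceCherry.mp hv
  obtain ⟨ℓ, hℓ, hver⟩ := hrv v ⟨hvN, hc.indeg_reduceCherry_of_mem hv ▸ hin,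
    hc.outdeg_reduceCherry_of_ne hN hvp ▸ hout⟩
  have hreduce : ∀ {ℓ}, N.Verifies ℓ v → (N.reduceCherry a b).Verifies ℓ v :=
    fun h => h.mono arcs_reduceCherry_subset rfl
  by_cases hℓa : ℓ = a
  · subst hℓa
    exact ⟨p, hc.isLeaf_reduceCherry hN, hreduce (hver.of_arc_s5 hc.arc_left hva)⟩
  by_cases hℓb : ℓ = b
  · subst hℓb
    exact ⟨p, hc.isLeaf_reduceCherry hN, hreduce (hver.of_arc_s5 hc.arc_right hvb)⟩
  refine ⟨ℓ, ?_, hreduce hver⟩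
  rw [← mem_leaves_iff, hc.leaves_reduceCherry hN]
  simp [mem_leaves_iff, hℓ, hℓa, hℓb]

end IsCherry

end Net

/-- Reducing a cherry `{a, b}` of a reticulation-visible phylogenetic
network (deleting `a` and `b` together with their incident arcs; their
common parent `p` becomes a leaf, which receives the new label) yields a
reticulation-visible phylogenetic network in which `p` is a leaf. -/
theorem stmt_5 {V : Type} [DecidableEq V] (N : Net V)
    (hphylo : N.IsPhylo) (hrv : N.ReticVisible)
    (a b p : V) (hab : a ≠ b)
    (ha : N.IsLeaf a) (hb : N.IsLeaf b)
    (hpa : N.Arc p a) (hpb : N.Arc p b) :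
    let N' : Net V :=
      ⟨(N.verts.erase a).erase b,
       N.arcs.filter (fun e => e.1 ≠ a ∧ e.1 ≠ b ∧ e.2 ≠ a ∧ e.2 ≠ b),
       N.root⟩
    N'.IsPhylo ∧ N'.ReticVisible ∧ N'.IsLeaf p ∧
      N'.leaves = (N.leaves.erase a).erase b ∪ {p} := by
  have hc : N.IsCherry a b p := ⟨hab, ha, hb, hpa, hpb⟩
  exact ⟨hc.isPhylo_reduceCherry hphylo, hc.reticVisible_reduceCherry hphylo hrv,
    hc.isLeaf_reduceCherry hphylo, hc.leaves_reduceCherry hphylo⟩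
end

section
/- Let N be a reticulation-visible phylogenetic network on X with no cherry and at least one reticulation, and let v be a reticulation at maximum distance from the root ρ (i.e., the length of a longest directed path from ρ to v is maximum among all reticulations). Then the unique child of v is a leaf. -/
variable {V : Type} [DecidableEq V]

namespace Net

variable {N : Net V}

lemma path_length_pos {u w : V} {l : List V} (h : N.IsPathList u w l) : 0 < l.length := by
  cases h <;> simp

lemma path_append_s8 {u v : V} {l : List V} (h : N.IsPathList u v l) :
    ∀ {c w : V} {m : List V}, N.Arc v c → N.IsPathList c w m → N.IsPathList u w (l ++ m) := by
  induction h with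
  | nil x => intro c w m hac hm; simpa using IsPathList.cons hac hm
  | cons ha hp ih => intro c w m hac hm; exact IsPathList.cons ha (ih hac hm)

lemma path_snoc {u v d : V} {l : List V} (h : N.IsPathList u v l) (hd : N.Arc v d) :
    N.IsPathList u d (l ++ [d]) := path_append_s8 h hd (.nil d)

lemma path_reaches {u w : V} {l : List V} (h : N.IsPathList u w l) :
    ∀ x ∈ l, Relation.ReflTransGen N.Arc u x := by
  induction h with
  | nil x => intro y hy; simp at hy; subst hy; exact .refl
  | cons ha hp ih =>
    intro y hy
    rcases List.mem_cons.1 hy with h | h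
    · subst h; exact .refl
    · exact (ih y h).head ha

lemma path_rtg {u w : V} {l : List V} (h : N.IsPathList u w l) :
    Relation.ReflTransGen N.Arc u w := by
  induction h with
  | nil x => exact .refl
  | cons ha hp ih => exact ih.head ha

lemma path_nodup (hacyc : ∀ x, ¬ Relation.TransGen N.Arc x x) {u w : V} {l : List V}
    (h : N.IsPathList u w l) : l.Nodup := by
  induction h with
  | nil x => simp
  | cons ha hp ih =>
    refine List.nodup_cons.2 ⟨fun hmem => ?_, ih⟩
    exact hacyc _ (Relation.TransGen.head' ha (path_reaches hp _ hmem))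

lemma path_mem_verts (hN : ∀ e ∈ N.arcs, e.1 ∈ N.verts ∧ e.2 ∈ N.verts)
    {u w : V} {l : List V} (h : N.IsPathList u w l) :
    u ∈ N.verts → ∀ x ∈ l, x ∈ N.verts := by
  induction h with
  | nil x => intro hu y hy; simp at hy; subst hy; exact hu
  | cons ha hp ih =>
    intro hu y hy
    rcases List.mem_cons.1 hy with h | h
    · subst h; exact hu
    · exact ih (hN _ ha).2 y h

lemma rtg_path {u w : V} (h : Relation.ReflTransGen N.Arc u w) :
    ∃ l, N.IsPathList u w l := by
  induction h with
  | refl => exact ⟨[u], .nil u⟩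
  | tail hr ha ih =>
    obtain ⟨l, hl⟩ := ih
    exact ⟨l ++ [_], path_snoc hl ha⟩

lemma path_singleton {u w x : V} (h : N.IsPathList u w [x]) : u = w := by
  cases h with
  | nil => rfl
  | cons ha hp => exact absurd (path_length_pos hp) (by simp)

lemma path_penult {u w : V} {l : List V} (h : N.IsPathList u w l) (h2 : 2 ≤ l.length) :
    ∃ p l', N.Arc p w ∧ N.IsPathList u p l' ∧ l = l' ++ [w] := by
  induction h with
  | nil x => simp at h2
  | cons ha hp ih =>
    rename_i u' w' x' l'
    rcases Nat.lt_or_ge l'.length 2 with h1 | hge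
    · have hl1 : l'.length = 1 := by have := path_length_pos hp; omega
      obtain ⟨y, hy⟩ := List.length_eq_one_iff.1 hl1
      subst hy
      cases hp with
      | nil => exact ⟨u', [u'], ha, .nil u', rfl⟩
      | cons ha' hp' => exact absurd (path_length_pos hp') (by simp)
    · obtain ⟨p, m', hpw, hm', heq⟩ := ih hge
      exact ⟨p, u' :: m', hpw, IsPathList.cons ha hm', by rw [heq]; rfl⟩

lemma outdeg_pos {u d : V} (h : N.Arc u d) : 0 < N.outdeg u :=
  Finset.card_pos.2 ⟨(u, d), Finset.mem_filter.2 ⟨h, rfl⟩⟩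

lemma indeg_pos {a w : V} (h : N.Arc a w) : 0 < N.indeg w :=
  Finset.card_pos.2 ⟨(a, w), Finset.mem_filter.2 ⟨h, rfl⟩⟩

lemma exists_arc_of_outdeg_pos {u : V} (h : 0 < N.outdeg u) : ∃ d, N.Arc u d := by
  obtain ⟨e, he⟩ := Finset.card_pos.1 h
  rw [Finset.mem_filter] at he
  exact ⟨e.2, by rw [show e = (u, e.2) from Prod.ext he.2 rfl] at he; exact he.1⟩

lemma exists_other_child {p ℓ : V} (h2 : N.outdeg p = 2) (h : N.Arc p ℓ) :
    ∃ c', c' ≠ ℓ ∧ N.Arc p c' := by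
  have hmem : (p, ℓ) ∈ N.arcs.filter (fun e => e.1 = p) := Finset.mem_filter.2 ⟨h, rfl⟩
  have h1 : 1 < (N.arcs.filter (fun e => e.1 = p)).card := by rw [Net.outdeg] at h2; omega
  obtain ⟨e, he, hne⟩ := Finset.exists_mem_ne h1 (p, ℓ)
  rw [Finset.mem_filter] at he
  refine ⟨e.2, fun hc => hne ?_, ?_⟩
  · exact Prod.ext he.2 hc
  · rw [show e = (p, e.2) from Prod.ext he.2 rfl] at he; exact he.1

end Net

/-- In a reticulation-visible phylogenetic network with no cherry, the child
of a reticulation at maximum distance from the root (length of a longest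
directed path from the root) is a leaf. -/
theorem stmt_8 {V : Type} [DecidableEq V] (N : Net V)
    (hphylo : N.IsPhylo) (hrv : N.ReticVisible)
    (hnocherry : ¬ ∃ a b p : V, a ≠ b ∧ N.IsLeaf a ∧ N.IsLeaf b ∧
      N.Arc p a ∧ N.Arc p b)
    (v : V) (hv : N.IsRetic v)
    (hmax : ∃ l : List V, N.IsPathList N.root v l ∧
      ∀ (w : V) (l' : List V), N.IsRetic w → N.IsPathList N.root w l' →
        l'.length ≤ l.length) :
    ∀ c : V, N.Arc v c → N.IsLeaf c := by
  classical
  intro c hvc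
  obtain ⟨hroot, harcs, hacyc, hreach, hif⟩ := hphylo
  have hcard : ¬ N.verts.card = 1 := by
    intro h
    rw [if_pos h] at hif
    exact absurd hvc (by simp [Net.Arc, hif])
  rw [if_neg hcard] at hif
  obtain ⟨hrin, hrout, hclass⟩ := hif
  obtain ⟨l₀, hl₀, hmaxlen⟩ := hmax
  have hcv : c ∈ N.verts := (harcs _ hvc).2
  -- no reticulation is reachable from c
  have hnoretic : ∀ w, Relation.ReflTransGen N.Arc c w → ¬ N.IsRetic w := by
    intro w hw hr
    obtain ⟨m, hm⟩ := Net.rtg_path hw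
    have h1 := hmaxlen w (l₀ ++ m) hr (Net.path_append_s8 hl₀ hvc hm)
    have h2 := Net.path_length_pos hm
    rw [List.length_append] at h1
    omega
  -- classification of vertices reachable from c
  have hclass' : ∀ w, Relation.ReflTransGen N.Arc c w →
      w ∈ N.verts ∧ (N.outdeg w = 0 ∨ N.outdeg w = 2) := by
    intro w hw
    have hin : ∃ a, N.Arc a w := by
      rcases Relation.ReflTransGen.cases_tail hw with h | ⟨b, _, hb⟩
      · exact h ▸ ⟨v, hvc⟩
      · exact ⟨b, hb⟩
    obtain ⟨a, ha⟩ := hin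
    have hwv : w ∈ N.verts := (harcs _ ha).2
    have hwr : w ≠ N.root := by
      intro h
      have := Net.indeg_pos ha
      rw [h, hrin] at this
      exact absurd this (by simp)
    rcases hclass w hwv hwr with h | h | h
    · exact ⟨hwv, Or.inl h.2⟩
    · exact ⟨hwv, Or.inr h.2⟩
    · exact absurd ⟨hwv, h⟩ (hnoretic w hw)
  -- lengths of paths from c are bounded
  have len_le : ∀ (w : V) (m : List V), N.IsPathList c w m → m.length ≤ N.verts.card := by
    intro w m hm
    have hnd := Net.path_nodup hacyc hm
    have hsub : m.toFinset ⊆ N.verts := fun x hx =>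
      Net.path_mem_verts harcs hm hcv x (List.mem_toFinset.1 hx)
    calc m.length = m.toFinset.card := (List.toFinset_card_of_nodup hnd).symm
      _ ≤ N.verts.card := Finset.card_le_card hsub
  -- a longest path from c
  set P : ℕ → Prop := fun n => ∃ w m, N.IsPathList c w m ∧ m.length = n with hP
  have hP1 : P 1 := ⟨c, [c], .nil c, rfl⟩
  have h1B : 1 ≤ N.verts.card := Finset.card_pos.2 ⟨c, hcv⟩
  obtain ⟨ℓ, m, hm, hmlen⟩ : P (Nat.findGreatest P N.verts.card) :=
    Nat.findGreatest_spec h1B hP1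
  have hmaxm : ∀ (w : V) (m' : List V), N.IsPathList c w m' → m'.length ≤ m.length := by
    intro w m' hm'
    rw [hmlen]
    exact Nat.le_findGreatest (len_le _ _ hm') ⟨w, m', hm', rfl⟩
  -- the endpoint ℓ of the longest path is a leaf
  have hℓ0 : N.outdeg ℓ = 0 := by
    rcases (hclass' ℓ (Net.path_rtg hm)).2 with h | h
    · exact h
    · exfalso
      obtain ⟨d, hd⟩ := Net.exists_arc_of_outdeg_pos (by omega : 0 < N.outdeg ℓ)
      have := hmaxm d (m ++ [d]) (Net.path_snoc hm hd)
      simp at this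
  have hℓleaf : N.IsLeaf ℓ := ⟨(hclass' ℓ (Net.path_rtg hm)).1, hℓ0⟩
  -- if c has out-degree 0 we are done; otherwise derive a cherry
  rcases (hclass' c Relation.ReflTransGen.refl).2 with h0 | h2
  · exact ⟨hcv, h0⟩
  exfalso
  have hcℓ : c ≠ ℓ := by
    intro h
    rw [h, hℓ0] at h2
    exact absurd h2 (by simp)
  have h2m : 2 ≤ m.length := by
    have h1 := Net.path_length_pos hm
    rcases Nat.lt_or_ge m.length 2 with hlt | hge
    · have : m.length = 1 := by omega
      obtain ⟨y, hy⟩ := List.length_eq_one_iff.1 this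
      exact absurd (Net.path_singleton (hy ▸ hm)) hcℓ
    · exact hge
  obtain ⟨p, m', hpℓ, hm', hmeq⟩ := Net.path_penult hm h2m
  have hprtg := Net.path_rtg hm'
  have hp2 : N.outdeg p = 2 := by
    rcases (hclass' p hprtg).2 with h | h
    · exact absurd (Net.outdeg_pos hpℓ) (by omega)
    · exact h
  obtain ⟨c', hc'ne, hpc'⟩ := Net.exists_other_child hp2 hpℓ
  have hc'rtg : Relation.ReflTransGen N.Arc c c' := hprtg.tail hpc'
  have hc'0 : N.outdeg c' = 0 := by
    rcases (hclass' c' hc'rtg).2 with h | h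
    · exact h
    · exfalso
      obtain ⟨d, hd⟩ := Net.exists_arc_of_outdeg_pos (by omega : 0 < N.outdeg c')
      have hlong := hmaxm d (m' ++ [c'] ++ [d])
        (Net.path_snoc (Net.path_snoc hm' hpc') hd)
      rw [hmeq] at hlong
      simp at hlong
  exact hnocherry ⟨ℓ, c', p, hc'ne.symm, hℓleaf, ⟨(hclass' c' hc'rtg).1, hc'0⟩, hpℓ, hpc'⟩
end

section
/- Let N be a phylogenetic network on X with root ρ, and let A be a nonempty subset of X. Then the set of vertices v of N such that every element of A verifies v (i.e., for each a in A, every directed path from ρ to a passes through v) is totally ordered by the ancestor relation; in particular, if this set is nonempty there is a unique such vertex at maximum path length from ρ. -/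
variable {V : Type} [DecidableEq V]

namespace Net

lemma start_mem {N : Net V} {u v : V} {l : List V} (h : N.IsPathList u v l) : u ∈ l := by
  cases h <;> simp

lemma head_ancestor {N : Net V} {u v x : V} {l : List V} (h : N.IsPathList u v l)
    (hx : x ∈ l) : N.Ancestor u x := by
  induction h with
  | nil w => simp at hx; subst hx; exact Relation.ReflTransGen.refl
  | cons harc hp ih =>
    rcases List.mem_cons.1 hx with rfl | hx
    · exact Relation.ReflTransGen.refl
    · exact Relation.ReflTransGen.head harc (ih hx)

lemma path_comparable {N : Net V} {r a u v : V} {l : List V} (h : N.IsPathList r a l)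
    (hu : u ∈ l) (hv : v ∈ l) : N.Ancestor u v ∨ N.Ancestor v u := by
  induction h with
  | nil w =>
    simp at hu hv; subst hu; subst hv; exact Or.inl Relation.ReflTransGen.refl
  | cons harc hp ih =>
    rcases List.mem_cons.1 hu with rfl | hu
    · exact Or.inl (head_ancestor (Net.IsPathList.cons harc hp) hv)
    · rcases List.mem_cons.1 hv with rfl | hv
      · exact Or.inr (head_ancestor (Net.IsPathList.cons harc hp) hu)
      · exact ih hu hv

lemma exists_path {N : Net V} {u v : V} (h : N.Ancestor u v) :
    ∃ l : List V, N.IsPathList u v l := by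
  induction h using Relation.ReflTransGen.head_induction_on with
  | refl => exact ⟨[v], Net.IsPathList.nil v⟩
  | head harc _ ih =>
    obtain ⟨l, hl⟩ := ih
    exact ⟨_, Net.IsPathList.cons harc hl⟩

lemma anc_antisymm {N : Net V} (hac : ∀ v : V, ¬ Relation.TransGen N.Arc v v)
    {u v : V} (h1 : N.Ancestor u v) (h2 : N.Ancestor v u) : u = v := by
  by_contra hne
  have h1' : Relation.TransGen N.Arc u v := by
    rcases (Relation.reflTransGen_iff_eq_or_transGen.mp h1) with h | h
    · exact absurd h.symm hne
    · exact h
  exact hac v (Relation.TransGen.trans_right h2 h1')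

lemma exists_max {N : Net V} (T : Finset V)
    (htot : ∀ u ∈ T, ∀ v ∈ T, N.Ancestor u v ∨ N.Ancestor v u) (hne : T.Nonempty) :
    ∃ m ∈ T, ∀ u ∈ T, N.Ancestor u m := by
  classical
  induction T using Finset.induction with
  | empty => simp at hne
  | @insert x s hx ih =>
    rcases s.eq_empty_or_nonempty with rfl | hs
    · refine ⟨x, by simp, ?_⟩
      intro u hu
      simp only [Finset.mem_insert, Finset.notMem_empty, or_false] at hu
      subst hu
      exact Relation.ReflTransGen.refl
    · obtain ⟨m, hm, hmax⟩ := ih (fun u hu v hv =>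
        htot u (Finset.mem_insert_of_mem hu) v (Finset.mem_insert_of_mem hv)) hs
      rcases htot x (Finset.mem_insert_self x s) m (Finset.mem_insert_of_mem hm) with
        h | h
      · refine ⟨m, Finset.mem_insert_of_mem hm, ?_⟩
        intro u hu
        rcases Finset.mem_insert.1 hu with rfl | hu
        · exact h
        · exact hmax u hu
      · refine ⟨x, Finset.mem_insert_self x s, ?_⟩
        intro u hu
        rcases Finset.mem_insert.1 hu with rfl | hu
        · exact Relation.ReflTransGen.refl
        · exact (hmax u hu).trans h

end Net

/-- For a nonempty set `A` of leaves, the set of vertices verified by every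
element of `A` is totally ordered by the ancestor relation; in particular
there is a unique deepest such vertex (one of which every vertex verified by
all of `A` is an ancestor). -/
theorem stmt_9 {V : Type} [DecidableEq V] (N : Net V)
    (hphylo : N.IsPhylo) (A : Finset V) (hA : A.Nonempty)
    (hAleaf : ∀ a ∈ A, N.IsLeaf a) :
    (∀ u v : V, u ∈ N.verts → v ∈ N.verts →
      (∀ a ∈ A, N.Verifies a u) → (∀ a ∈ A, N.Verifies a v) →
      N.Ancestor u v ∨ N.Ancestor v u) ∧
    (∃! v : V, v ∈ N.verts ∧ (∀ a ∈ A, N.Verifies a v) ∧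
      ∀ u ∈ N.verts, (∀ a ∈ A, N.Verifies a u) → N.Ancestor u v) := by
  classical
  obtain ⟨a0, ha0⟩ := hA
  have ha0v : a0 ∈ N.verts := (hAleaf a0 ha0).1
  obtain ⟨l, hl⟩ := Net.exists_path (hphylo.2.2.2.1 a0 ha0v)
  have part1 : ∀ u v : V, u ∈ N.verts → v ∈ N.verts →
      (∀ a ∈ A, N.Verifies a u) → (∀ a ∈ A, N.Verifies a v) →
      N.Ancestor u v ∨ N.Ancestor v u := by
    intro u v _ _ hvu hvv
    exact Net.path_comparable hl (hvu a0 ha0 l hl) (hvv a0 ha0 l hl)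
  refine ⟨part1, ?_⟩
  set T : Finset V := N.verts.filter (fun v => ∀ a ∈ A, N.Verifies a v) with hT
  have hTmem : ∀ v, v ∈ T ↔ v ∈ N.verts ∧ ∀ a ∈ A, N.Verifies a v := by
    intro v; simp [hT]
  have hroot : N.root ∈ T := by
    rw [hTmem]
    exact ⟨hphylo.1, fun a _ l' hl' => Net.start_mem hl'⟩
  obtain ⟨m, hm, hmax⟩ := Net.exists_max T
    (fun u hu v hv => part1 u v ((hTmem u).1 hu).1 ((hTmem v).1 hv).1
      ((hTmem u).1 hu).2 ((hTmem v).1 hv).2) ⟨N.root, hroot⟩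
  obtain ⟨hmv, hmver⟩ := (hTmem m).1 hm
  refine ⟨m, ⟨hmv, hmver, fun u hu hver => hmax u ((hTmem u).2 ⟨hu, hver⟩)⟩, ?_⟩
  rintro v ⟨hvv, hvver, hvmax⟩
  exact Net.anc_antisymm hphylo.2.2.1 (hmax v ((hTmem v).2 ⟨hvv, hvver⟩))
    (hvmax m hmv hmver)
end

section
/- Let N be a phylogenetic network on X with root ρ, let a and b be distinct leaves, and let ρ_ab be a vertex verified by both a and b at maximum path length from ρ. Then ρ_ab is not a reticulation. -/
variable {V : Type} [DecidableEq V]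

lemma path_head_mem {N : Net V} {u x : V} {l : List V}
    (h : N.IsPathList u x l) : u ∈ l := by
  cases h with
  | nil => simp
  | cons h1 h2 => simp

lemma path_append {N : Net V} {u v w : V} {l : List V}
    (h : N.IsPathList u v l) (harc : N.Arc v w) :
    N.IsPathList u w (l ++ [w]) := by
  induction h with
  | nil v => exact Net.IsPathList.cons harc (Net.IsPathList.nil w)
  | cons ha hp ih => exact Net.IsPathList.cons ha (ih harc)

lemma mem_path_next {N : Net V} {u x v : V} {l : List V}
    (h : N.IsPathList u x l) (hv : v ∈ l) :
    v = x ∨ ∃ w ∈ l, N.Arc v w := by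
  induction h with
  | nil y => left; simpa using hv
  | cons ha hp ih =>
    rename_i u' w' x' l'
    rcases List.mem_cons.mp hv with rfl | hv'
    · right; exact ⟨w', List.mem_cons_of_mem _ (path_head_mem hp), ha⟩
    · rcases ih hv' with h1 | ⟨w, hw, harc⟩
      · exact Or.inl h1
      · exact Or.inr ⟨w, List.mem_cons_of_mem _ hw, harc⟩

/-- If `ρab` is a vertex verified by both leaves `a` and `b` at maximum path
length from the root among all such vertices, then `ρab` is not a
reticulation. -/
theorem stmt_10 {V : Type} [DecidableEq V] (N : Net V)
    (hphylo : N.IsPhylo) (a b ρab : V) (hab : a ≠ b)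
    (ha : N.IsLeaf a) (hb : N.IsLeaf b) (hρ : ρab ∈ N.verts)
    (hva : N.Verifies a ρab) (hvb : N.Verifies b ρab)
    (hmax : ∃ l : List V, N.IsPathList N.root ρab l ∧
      ∀ (u : V) (l' : List V), u ∈ N.verts →
        N.Verifies a u → N.Verifies b u →
        N.IsPathList N.root u l' → l'.length ≤ l.length) :
    ¬ N.IsRetic ρab := by
  rintro ⟨hv, hin, hout⟩
  -- the unique out-arc of ρab
  obtain ⟨e, he⟩ := Finset.card_eq_one.mp hout
  have heρ : e ∈ N.arcs ∧ e.1 = ρab := by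
    have : e ∈ N.arcs.filter (fun e => e.1 = ρab) := by rw [he]; simp
    simpa using this
  set c := e.2 with hc
  have harc : N.Arc ρab c := by
    have h1 := heρ.1
    have : e = (ρab, c) := by rw [← heρ.2, hc]
    rw [this] at h1; exact h1
  have huniq : ∀ w, N.Arc ρab w → w = c := by
    intro w hw
    have hmem : (ρab, w) ∈ N.arcs.filter (fun e => e.1 = ρab) := by
      exact Finset.mem_filter.mpr ⟨hw, rfl⟩
    rw [he] at hmem
    have h2 := Finset.mem_singleton.mp hmem
    rw [hc, ← h2]
  have hcv : c ∈ N.verts := (hphylo.2.1 e heρ.1).2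
  have hρne : ∀ x, N.IsLeaf x → ρab ≠ x := by
    rintro x hx rfl
    rw [hx.2] at hout; exact one_ne_zero hout.symm
  -- c is verified by any leaf verifying ρab
  have hver : ∀ x, N.IsLeaf x → N.Verifies x ρab → N.Verifies x c := by
    intro x hx hvx l hl
    have hmem := hvx l hl
    rcases mem_path_next hl hmem with h1 | ⟨w, hw, harcw⟩
    · exact absurd h1 (hρne x hx)
    · rw [← huniq w harcw]; exact hw
  obtain ⟨l, hl, hmax⟩ := hmax
  have hl' : N.IsPathList N.root c (l ++ [c]) := path_append hl harc
  have := hmax c (l ++ [c]) hcv (hver a ha hva) (hver b hb hvb) hl'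
  simp at this
end

section
/- Let N be a phylogenetic network on X with root ρ, let a and b be distinct leaves, and let ρ_ab be the deepest vertex verified by both a and b. If neither child p nor child q of ρ_ab is verified by a (respectively by b), then there is a directed path from p to a and from p to b, and a directed path from q to a and from q to b. -/
variable {V : Type} [DecidableEq V]

namespace Net

lemma pathlist_ancestor {N : Net V} {u x : V} {l : List V}
    (h : N.IsPathList u x l) : N.Ancestor u x := by
  induction h with
  | nil v => exact Relation.ReflTransGen.refl
  | cons harc _ ih => exact Relation.ReflTransGen.head harc ih

lemma ancestor_pathlist {N : Net V} {u x : V}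
    (h : N.Ancestor u x) : ∃ l, N.IsPathList u x l := by
  induction h using Relation.ReflTransGen.head_induction_on with
  | refl => exact ⟨[x], .nil x⟩
  | head harc _ ih => obtain ⟨l, hl⟩ := ih; exact ⟨_, .cons harc hl⟩

lemma pathlist_suffix {N : Net V} {u x v : V} {l : List V}
    (h : N.IsPathList u x l) (hv : v ∈ l) :
    ∃ l', N.IsPathList v x l' ∧ ∀ y ∈ l', y ∈ l := by
  induction h with
  | nil =>
    simp only [List.mem_singleton] at hv
    subst hv; exact ⟨[v], .nil v, by simp⟩
  | cons harc hpath ih =>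
    rcases List.mem_cons.1 hv with rfl | hv'
    · exact ⟨_, .cons harc hpath, fun y hy => hy⟩
    · obtain ⟨l', h1, h2⟩ := ih hv'
      exact ⟨l', h1, fun y hy => List.mem_cons_of_mem _ (h2 y hy)⟩

lemma leaf_no_arc {N : Net V} {ℓ w : V} (h : N.IsLeaf ℓ) : ¬ N.Arc ℓ w := by
  intro harc
  have hmem : (ℓ, w) ∈ N.arcs.filter (fun e => e.1 = ℓ) := by
    simp [Net.Arc] at harc ⊢; exact harc
  have := h.2
  rw [Net.outdeg, Finset.card_eq_zero] at this
  rw [this] at hmem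
  exact absurd hmem (Finset.notMem_empty _)

end Net

/-- Let `ρab` be the deepest vertex verified by both leaves `a` and `b`, with
children `p` and `q`. If neither `p` nor `q` is verified by `a` or by `b`
(and the hypotheses corresponding to exclusions of Easy Case EC4 hold), then
there are directed paths from `p` to each of `a` and `b`, and from `q` to
each of `a` and `b`. -/
theorem stmt_11 {V : Type} [DecidableEq V] (N : Net V)
    (hphylo : N.IsPhylo) (a b ρab p q : V) (hab : a ≠ b)
    (ha : N.IsLeaf a) (hb : N.IsLeaf b) (hρ : ρab ∈ N.verts)
    (hva : N.Verifies a ρab) (hvb : N.Verifies b ρab)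
    (hdeep : ∀ u ∈ N.verts, N.Verifies a u → N.Verifies b u →
      N.Ancestor u ρab)
    (hp : N.Arc ρab p) (hq : N.Arc ρab q) (hpq : p ≠ q)
    (hnpa : ¬ N.Verifies a p) (hnpb : ¬ N.Verifies b p)
    (hnqa : ¬ N.Verifies a q) (hnqb : ¬ N.Verifies b q)
    (hEC4 : ∀ u ∈ N.verts, u ≠ ρab → N.Ancestor ρab u →
      ¬ (N.Verifies a u ∧ ¬ N.Verifies b u ∧
          ∃ pb : V, N.Arc pb b ∧ N.Ancestor u pb) ∧
      ¬ (N.Verifies b u ∧ ¬ N.Verifies a u ∧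
          ∃ pa : V, N.Arc pa a ∧ N.Ancestor u pa)) :
    N.Ancestor p a ∧ N.Ancestor p b ∧ N.Ancestor q a ∧ N.Ancestor q b := by
  obtain ⟨hroot, harcs, hacyc, hreach, hlast⟩ := hphylo
  -- rule out the one-vertex case
  by_cases h1 : N.verts.card = 1
  · rw [if_pos h1] at hlast
    exact absurd (by rw [Net.Arc, hlast] at hp; exact hp) (Finset.notMem_empty _)
  rw [if_neg h1] at hlast
  obtain ⟨hin, hout, hdeg⟩ := hlast
  -- the filter of out-arcs of ρab contains the two arcs to p and q
  have hsub : ({(ρab, p), (ρab, q)} : Finset (V × V)) ⊆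
      N.arcs.filter (fun e => e.1 = ρab) := by
    intro e he
    simp only [Finset.mem_insert, Finset.mem_singleton] at he
    rcases he with rfl | rfl <;> simp [Finset.mem_filter] <;> assumption
  have hcard2 : ({(ρab, p), (ρab, q)} : Finset (V × V)).card = 2 := by
    rw [Finset.card_insert_of_notMem (by simp [hpq]), Finset.card_singleton]
  have hod : N.outdeg ρab = 2 := by
    have hge : 2 ≤ N.outdeg ρab := by
      rw [Net.outdeg, ← hcard2]; exact Finset.card_le_card hsub
    by_cases hr : ρab = N.root
    · rw [hr]; exact hout
    · rcases hdeg ρab hρ hr with ⟨_, h0⟩ | ⟨_, h2⟩ | ⟨_, h3⟩ <;> omega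
  have hfilt : N.arcs.filter (fun e => e.1 = ρab) =
      ({(ρab, p), (ρab, q)} : Finset (V × V)) :=
    (Finset.eq_of_subset_of_card_le hsub (by rw [hcard2, ← hod, Net.outdeg])).symm
  have hchild : ∀ w, N.Arc ρab w → w = p ∨ w = q := by
    intro w hw
    have : (ρab, w) ∈ N.arcs.filter (fun e => e.1 = ρab) := by
      simp [Finset.mem_filter]; exact hw
    rw [hfilt] at this
    simp only [Finset.mem_insert, Finset.mem_singleton, Prod.mk.injEq] at this
    rcases this with ⟨_, h⟩ | ⟨_, h⟩
    · exact Or.inl h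
    · exact Or.inr h
  -- key claim
  have key : ∀ c d ℓ : V, (∀ w, N.Arc ρab w → w = c ∨ w = d) → N.IsLeaf ℓ →
      N.Verifies ℓ ρab → ¬ N.Verifies ℓ d → N.Ancestor c ℓ := by
    intro c d ℓ hcd hℓ hvρ hnd
    rw [Net.Verifies] at hnd
    push_neg at hnd
    obtain ⟨l, hl, hdl⟩ := hnd
    have hρl : ρab ∈ l := hvρ l hl
    obtain ⟨l', hl', hl'sub⟩ := N.pathlist_suffix hl hρl
    cases hl' with
    | nil => exact absurd hp (N.leaf_no_arc hℓ)
    | cons harc hpath =>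
      rename_i w tl
      rcases hcd w harc with rfl | rfl
      · exact N.pathlist_ancestor hpath
      · exact absurd (hl'sub w (by
          cases hpath with
          | nil => simp
          | cons _ _ => simp)) hdl
  exact ⟨key p q a hchild ha hva hnqa,
    key p q b hchild hb hvb hnqb,
    key q p a (fun w hw => (hchild w hw).symm) ha hva hnpa,
    key q p b (fun w hw => (hchild w hw).symm) hb hvb hnpb⟩
end
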